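/- For Z ∈ ℝ^{n×n}, define the row-wise softmax by softmax(Z)_{i,j} = exp(Z_{i,j}) / Σ_{k=1}^{n} exp(Z_{i,k}). For z ∈ ℝ^{n×d} and W_Q, W_K, W_V, W_O ∈ ℝ^{d×d}, define the single-head self-attention output Attn(z; W_Q, W_K, W_V, W_O) = softmax( z W_Qᵀ (z W_Kᵀ)ᵀ / √d ) · z W_Vᵀ W_Oᵀ. Let R_emb, R ∈ ℝ^{d×d} be orthogonal and let γ, γ' ∈ ℝ^d have all entries nonzero. Define z' = z · diag(γ)⁻¹ R_emb diag(γ'), W_Q' = R W_Q diag(γ) R_emb diag(γ')⁻¹, W_K' = R W_K diag(γ) R_emb diag(γ')⁻¹, W_V' = W_V diag(γ) R_emb diag(γ')⁻¹, and W_O' = R_embᵀ W_O. Then Attn(z'; W_Q', W_K', W_V', W_O') = Attn(z; W_Q, W_K, W_V, W_O) · R_emb. -/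

import Mathlib

/-!
The layernorm rescalings and the embedding rotation enter the attention scores and values only
through products `x' * W'ᵀ`. For `x' = x * P` and `W' = W * Q` with `P * Qᵀ = 1` these collapse to
`x * Wᵀ`; here `P = diag(γ)⁻¹ R_emb diag(γ')` and `Q = diag(γ) R_emb diag(γ')⁻¹`, and `P * Qᵀ = 1`
because diagonal matrices are symmetric and `R_emb` is orthogonal. The query/key rotation `R`
then cancels in the scores since `Rᵀ R = 1`, so the softmax argument is unchanged, and only the
output projection `R_embᵀ W_O` leaves the factor `R_emb` behind.
-/

open Matrix

namespace Matrix

variable {m n k l α : Type*} [Fintype n] [Fintype k]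

theorem mul_mul_transpose_mul_of_mul_transpose_eq_one [DecidableEq n] [CommSemiring α]
    {P Q : Matrix n k α} (hPQ : P * Qᵀ = 1) (x : Matrix m n α) (W : Matrix l n α) :
    (x * P) * (W * Q)ᵀ = x * Wᵀ := by
  rw [transpose_mul, Matrix.mul_assoc, ← Matrix.mul_assoc P, hPQ, Matrix.one_mul]

theorem inv_mul_mul_mul_transpose_mul_mul_inv [DecidableEq n] [CommRing α] {D D' U : Matrix n n α}
    (hD : IsUnit D.det) (hD' : IsUnit D'.det) (hDsymm : D.IsSymm) (hD'symm : D'.IsSymm)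
    (hU : U * Uᵀ = 1) :
    (D⁻¹ * U * D') * (D * U * D'⁻¹)ᵀ = 1 := by
  rw [transpose_mul, transpose_mul, transpose_nonsing_inv, hDsymm.eq, hD'symm.eq]
  calc D⁻¹ * U * D' * (D'⁻¹ * (Uᵀ * D))
      = D⁻¹ * U * (D' * D'⁻¹) * Uᵀ * D := by simp only [Matrix.mul_assoc]
    _ = 1 := by
      rw [mul_nonsing_inv _ hD', Matrix.mul_one, Matrix.mul_assoc D⁻¹, hU, Matrix.mul_one,
        nonsing_inv_mul _ hD]

theorem mul_transpose_mul_mul_transpose_of_transpose_mul_eq_one [DecidableEq k] [CommSemiring α]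
    {R : Matrix k k α} (hR : Rᵀ * R = 1) (x : Matrix m n α) (y : Matrix l n α)
    (A B : Matrix k n α) :
    (x * (R * A)ᵀ) * (y * (R * B)ᵀ)ᵀ = (x * Aᵀ) * (y * Bᵀ)ᵀ := by
  simp only [transpose_mul, transpose_transpose, Matrix.mul_assoc]
  rw [← Matrix.mul_assoc Rᵀ R, hR, Matrix.one_mul]

theorem isUnit_det_diagonal [DecidableEq n] [Field α] {v : n → α} (hv : ∀ i, v i ≠ 0) :
    IsUnit (diagonal v).det := by
  rw [← isUnit_iff_isUnit_det, isUnit_diagonal, Pi.isUnit_iff]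
  exact fun i => (hv i).isUnit

end Matrix

theorem stmt_11_general {n d : ℕ}
    (z : Matrix (Fin n) (Fin d) ℝ)
    (WQ WK WV WO : Matrix (Fin d) (Fin d) ℝ)
    (Remb R : Matrix (Fin d) (Fin d) ℝ)
    (hRemb : Remb * Rembᵀ = 1 ∧ Rembᵀ * Remb = 1)
    (hR : R * Rᵀ = 1 ∧ Rᵀ * R = 1)
    (γ γ' : Fin d → ℝ) (hγ : ∀ i, γ i ≠ 0) (hγ' : ∀ i, γ' i ≠ 0)
    (softmax : Matrix (Fin n) (Fin n) ℝ → Matrix (Fin n) (Fin n) ℝ)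
    (Attn : Matrix (Fin n) (Fin d) ℝ → Matrix (Fin d) (Fin d) ℝ →
      Matrix (Fin d) (Fin d) ℝ → Matrix (Fin d) (Fin d) ℝ →
      Matrix (Fin d) (Fin d) ℝ → Matrix (Fin n) (Fin d) ℝ)
    (hAttn : Attn = fun x Q K V O =>
      softmax ((Real.sqrt d)⁻¹ • ((x * Qᵀ) * (x * Kᵀ)ᵀ)) * (x * Vᵀ * Oᵀ)) :
    Attn (z * (Matrix.diagonal γ)⁻¹ * Remb * Matrix.diagonal γ')
        (R * WQ * Matrix.diagonal γ * Remb * (Matrix.diagonal γ')⁻¹)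
        (R * WK * Matrix.diagonal γ * Remb * (Matrix.diagonal γ')⁻¹)
        (WV * Matrix.diagonal γ * Remb * (Matrix.diagonal γ')⁻¹)
        (Rembᵀ * WO)
      = Attn z WQ WK WV WO * Remb := by
  have hPQ := inv_mul_mul_mul_transpose_mul_mul_inv (isUnit_det_diagonal hγ)
    (isUnit_det_diagonal hγ') (isSymm_diagonal γ) (isSymm_diagonal γ') hRemb.1
  have hx :
      z * (diagonal γ)⁻¹ * Remb * diagonal γ' = z * ((diagonal γ)⁻¹ * Remb * diagonal γ') := by
    simp only [Matrix.mul_assoc]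
  have hW (W : Matrix (Fin d) (Fin d) ℝ) :
      W * diagonal γ * Remb * (diagonal γ')⁻¹ = W * (diagonal γ * Remb * (diagonal γ')⁻¹) := by
    simp only [Matrix.mul_assoc]
  subst hAttn
  simp only [hx, hW, mul_mul_transpose_mul_of_mul_transpose_eq_one hPQ,
    mul_transpose_mul_mul_transpose_of_transpose_mul_eq_one hR.2]
  simp only [transpose_mul, transpose_transpose, Matrix.mul_assoc]

/-- Self-attention step of the output-preserving rotation (Theorem 5 / Appendix F):
rotating the residual stream by `R_emb`, the query/key matrices by `R`, and replacing
layernorm weights `γ` by `γ'` rotates the attention output exactly by `R_emb`. -/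
theorem stmt_11 {n d : ℕ}
    (z : Matrix (Fin n) (Fin d) ℝ)
    (WQ WK WV WO : Matrix (Fin d) (Fin d) ℝ)
    (Remb R : Matrix (Fin d) (Fin d) ℝ)
    (hRemb : Remb * Rembᵀ = 1 ∧ Rembᵀ * Remb = 1)
    (hR : R * Rᵀ = 1 ∧ Rᵀ * R = 1)
    (γ γ' : Fin d → ℝ) (hγ : ∀ i, γ i ≠ 0) (hγ' : ∀ i, γ' i ≠ 0)
    (softmax : Matrix (Fin n) (Fin n) ℝ → Matrix (Fin n) (Fin n) ℝ)
    (hsoftmax : softmax = fun Z =>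
      Matrix.of fun i j => Real.exp (Z i j) / ∑ k, Real.exp (Z i k))
    (Attn : Matrix (Fin n) (Fin d) ℝ → Matrix (Fin d) (Fin d) ℝ →
      Matrix (Fin d) (Fin d) ℝ → Matrix (Fin d) (Fin d) ℝ →
      Matrix (Fin d) (Fin d) ℝ → Matrix (Fin n) (Fin d) ℝ)
    (hAttn : Attn = fun x Q K V O =>
      softmax ((Real.sqrt d)⁻¹ • ((x * Qᵀ) * (x * Kᵀ)ᵀ)) * (x * Vᵀ * Oᵀ)) :
    Attn (z * (Matrix.diagonal γ)⁻¹ * Remb * Matrix.diagonal γ')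
        (R * WQ * Matrix.diagonal γ * Remb * (Matrix.diagonal γ')⁻¹)
        (R * WK * Matrix.diagonal γ * Remb * (Matrix.diagonal γ')⁻¹)
        (WV * Matrix.diagonal γ * Remb * (Matrix.diagonal γ')⁻¹)
        (Rembᵀ * WO)
      = Attn z WQ WK WV WO * Remb :=
  stmt_11_general z WQ WK WV WO Remb R hRemb hR γ γ' hγ hγ' softmax Attn hAttn
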